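/- arXiv:2510.10247 — 8 statements merged into one kernel-verified Lean document; each statement's English description precedes it below -/
import Mathlib

section
/- Let T : I → Submodule ℝ (ℝ^ν) assign to each t a subspace (the tangent space at γ(t)), and suppose x, y : I → ℝ^ν are differentiable curves such that for all t, x(t) − y(t) ∈ T(t) and both x'(t) and y'(t) are orthogonal to T(t). Then ‖x(t) − y(t)‖ is constant in t. In particular, if x(s) = y(s) for some s ∈ I, then x = y on I. -/
open scoped RealInnerProductSpace

/-- Two differentiable curves whose difference lies in a moving subspace `T t`
and whose velocities are orthogonal to `T t` stay at constant distance;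
in particular they coincide as soon as they coincide once. -/
theorem rolling_uniqueness_isometry {ν : ℕ} (I : Set ℝ) (hIconn : I.OrdConnected)
    (T : ℝ → Submodule ℝ (EuclideanSpace ℝ (Fin ν)))
    (x y : ℝ → EuclideanSpace ℝ (Fin ν))
    (hx : Differentiable ℝ x) (hy : Differentiable ℝ y)
    (hmem : ∀ t ∈ I, x t - y t ∈ T t)
    (hxorth : ∀ t ∈ I, ∀ w ∈ T t, ⟪deriv x t, w⟫ = 0)
    (hyorth : ∀ t ∈ I, ∀ w ∈ T t, ⟪deriv y t, w⟫ = 0) :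
    (∀ s ∈ I, ∀ t ∈ I, ‖x t - y t‖ = ‖x s - y s‖) ∧
      (∀ s ∈ I, x s = y s → ∀ t ∈ I, x t = y t) := by
  set d : ℝ → EuclideanSpace ℝ (Fin ν) := fun t => x t - y t with hd
  have hdd : Differentiable ℝ d := hx.sub hy
  set g : ℝ → ℝ := fun t => ⟪d t, d t⟫ with hg
  have hkey : ∀ t ∈ I, HasDerivAt g 0 t := by
    intro t ht
    have h1 : HasDerivAt d (deriv x t - deriv y t) t :=
      (hx t).hasDerivAt.sub (hy t).hasDerivAt
    have h2 : HasDerivAt g (⟪d t, deriv x t - deriv y t⟫ + ⟪deriv x t - deriv y t, d t⟫) t :=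
      h1.inner ℝ h1
    have hz : ⟪deriv x t - deriv y t, d t⟫ = 0 := by
      rw [inner_sub_left, hxorth t ht _ (hmem t ht), hyorth t ht _ (hmem t ht), sub_zero]
    have hz' : ⟪d t, deriv x t - deriv y t⟫ = 0 := by
      rw [real_inner_comm]; exact hz
    rw [hz, hz', add_zero] at h2
    exact h2
  have hconst : ∀ s ∈ I, ∀ t ∈ I, g t = g s := by
    intro s hs t ht
    have hconv : Convex ℝ I := convex_iff_ordConnected.mpr hIconn
    have := hconv.norm_image_sub_le_of_norm_hasFDerivWithin_le
      (f := g) (f' := fun t => (0 : ℝ →L[ℝ] ℝ)) (C := 0)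
      (fun u hu => ((hkey u hu).hasFDerivAt.hasFDerivWithinAt).congr_fderiv (by
        ext; simp)) (fun u hu => by simp) hs ht
    have h0 : g t - g s = 0 := by simpa using this
    linarith
  have hnorm : ∀ s ∈ I, ∀ t ∈ I, ‖x t - y t‖ = ‖x s - y s‖ := by
    intro s hs t ht
    have h1 : ‖d t‖ ^ 2 = ‖d s‖ ^ 2 := by
      rw [← real_inner_self_eq_norm_sq, ← real_inner_self_eq_norm_sq]
      exact hconst s hs t ht
    have h2 := norm_nonneg (d t)
    have h3 := norm_nonneg (d s)
    refine le_antisymm ?_ ?_ <;> nlinarith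
  refine ⟨hnorm, fun s hs hxy t ht => ?_⟩
  have : ‖x t - y t‖ = 0 := by
    rw [hnorm s hs t ht, hxy, sub_self, norm_zero]
  exact sub_eq_zero.mp (norm_eq_zero.mp this)
end

section
/- Suppose e₁,…,e_n : J → ℝ^ν are C¹ maps such that {e₁(t),…,e_n(t)} is linearly independent spanning a subspace T(t), and γ : J → ℝ^ν is an arbitrary C¹ map. Write x(t) = γ(t) + Σᵢ eᵢ(t)·λᵢ(t). Then x'(t) ⊥ T(t) for all t if and only if the coefficient functions λᵢ satisfy the linear ODE system λᵢ'(t) + bᵢ(t) + Σ_k B_{ik}(t)·λ_k(t) = 0, where g_{ij}(t) = ⟨eᵢ(t), e_j(t)⟩, ĝ = g⁻¹, Γ_{ij}(t) = ⟨eᵢ(t), e_j'(t)⟩, B_{ik}(t) = Σ_j ĝ_{ij}(t)Γ_{jk}(t), and bᵢ(t) = Σ_j ĝ_{ij}(t)⟨e_j(t), γ'(t)⟩. -/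
open scoped RealInnerProductSpace

lemma rolling_aux_mul {n : ℕ} (A C : Matrix (Fin n) (Fin n) ℝ) (h : A * C = 1)
    (c : Fin n → ℝ) (j : Fin n) : ∑ i, A j i * (∑ k, C i k * c k) = c j := by
  calc ∑ i, A j i * ∑ k, C i k * c k
      = ∑ i, ∑ k, A j i * C i k * c k := by
        simp [Finset.mul_sum, mul_assoc]
    _ = ∑ k, (∑ i, A j i * C i k) * c k := by
        rw [Finset.sum_comm]; simp [Finset.sum_mul]
    _ = ∑ k, (A * C) j k * c k := by simp [Matrix.mul_apply]
    _ = c j := by rw [h]; simp [Matrix.one_apply]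

/-- In a C¹ moving frame `e₁,…,e_n`, the curve
`x(t) = γ(t) + Σᵢ λᵢ(t)·eᵢ(t)` has velocity orthogonal to
`T(t) = span{eᵢ(t)}` iff the coefficients satisfy the linear ODE system
`λᵢ' + bᵢ + Σ_k B_{ik}·λ_k = 0`. -/
theorem rolling_equations_in_moving_frame {ν n : ℕ} (J : Set ℝ)
    (hJopen : IsOpen J) (hJconn : J.OrdConnected)
    (e : Fin n → ℝ → EuclideanSpace ℝ (Fin ν))
    (he : ∀ i, ContDiff ℝ 1 (e i))
    (hind : ∀ t ∈ J, LinearIndependent ℝ (fun i => e i t))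
    (γ : ℝ → EuclideanSpace ℝ (Fin ν)) (hγ : Differentiable ℝ γ)
    (l : Fin n → ℝ → ℝ) (hl : ∀ i, Differentiable ℝ (l i))
    (g ginv : ℝ → Matrix (Fin n) (Fin n) ℝ)
    (hg : ∀ t, ∀ i j, g t i j = ⟪e i t, e j t⟫)
    (hginv : ∀ t ∈ J, g t * ginv t = 1 ∧ ginv t * g t = 1)
    (B : ℝ → Matrix (Fin n) (Fin n) ℝ)
    (hB : ∀ t, ∀ i k, B t i k = ∑ j, ginv t i j * ⟪e j t, deriv (e k) t⟫)
    (b : ℝ → Fin n → ℝ)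
    (hb : ∀ t, ∀ i, b t i = ∑ j, ginv t i j * ⟪e j t, deriv γ t⟫) :
    (∀ t ∈ J, ∀ w ∈ Submodule.span ℝ (Set.range fun i => e i t),
        ⟪deriv (fun u => γ u + ∑ i, l i u • e i u) t, w⟫ = 0) ↔
      (∀ t ∈ J, ∀ i, deriv (l i) t + b t i + ∑ k, B t i k * l k t = 0) := by
  have hedif : ∀ i, Differentiable ℝ (e i) := fun i => (he i).differentiable one_ne_zero
  have hD : ∀ t, deriv (fun u => γ u + ∑ i, l i u • e i u) t
      = deriv γ t + ∑ m, (l m t • deriv (e m) t + deriv (l m) t • e m t) := by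
    intro t
    have h1 : HasDerivAt (fun u => γ u + ∑ i, l i u • e i u)
        (deriv γ t + ∑ m, (l m t • deriv (e m) t + deriv (l m) t • e m t)) t := by
      refine ((hγ t).hasDerivAt).add (HasDerivAt.fun_sum fun i _ => ?_)
      exact ((hl i t).hasDerivAt).smul ((hedif i t).hasDerivAt)
    exact h1.deriv
  have hinner : ∀ t, ∀ j : Fin n, ⟪deriv (fun u => γ u + ∑ i, l i u • e i u) t, e j t⟫
      = ⟪deriv γ t, e j t⟫
        + ∑ m, (l m t * ⟪deriv (e m) t, e j t⟫ + deriv (l m) t * ⟪e m t, e j t⟫) := by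
    intro t j
    rw [hD]
    simp only [inner_add_left, sum_inner, real_inner_smul_left]
  have key : ∀ t ∈ J, ∀ i, deriv (l i) t + b t i + ∑ k, B t i k * l k t
      = ∑ j, ginv t i j * ⟪deriv (fun u => γ u + ∑ i, l i u • e i u) t, e j t⟫ := by
    intro t ht i
    have h1 := (hginv t ht).2
    have e1 : ∑ j, ginv t i j * ⟪deriv γ t, e j t⟫ = b t i := by
      rw [hb]
      exact Finset.sum_congr rfl fun j _ => by rw [real_inner_comm]
    have e2 : ∑ j, ginv t i j * (∑ m, deriv (l m) t * ⟪e m t, e j t⟫) = deriv (l i) t := by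
      have hgs : ∀ (j m : Fin n), ⟪e m t, e j t⟫ = g t j m := fun j m => by
        rw [hg, real_inner_comm]
      calc ∑ j, ginv t i j * ∑ m, deriv (l m) t * ⟪e m t, e j t⟫
          = ∑ j, ∑ m, ginv t i j * g t j m * deriv (l m) t := by
            simp only [Finset.mul_sum]
            exact Finset.sum_congr rfl fun j _ => Finset.sum_congr rfl fun m _ => by
              rw [hgs]; ring
        _ = ∑ m, (∑ j, ginv t i j * g t j m) * deriv (l m) t := by
            rw [Finset.sum_comm]; simp [Finset.sum_mul]
        _ = ∑ m, (ginv t * g t) i m * deriv (l m) t := by simp [Matrix.mul_apply]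
        _ = deriv (l i) t := by rw [h1]; simp [Matrix.one_apply]
    have e3 : ∑ j, ginv t i j * (∑ m, l m t * ⟪deriv (e m) t, e j t⟫)
        = ∑ k, B t i k * l k t := by
      calc ∑ j, ginv t i j * ∑ m, l m t * ⟪deriv (e m) t, e j t⟫
          = ∑ j, ∑ m, ginv t i j * ⟪e j t, deriv (e m) t⟫ * l m t := by
            simp only [Finset.mul_sum]
            exact Finset.sum_congr rfl fun j _ => Finset.sum_congr rfl fun m _ => by
              rw [real_inner_comm]; ring
        _ = ∑ m, (∑ j, ginv t i j * ⟪e j t, deriv (e m) t⟫) * l m t := by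
            rw [Finset.sum_comm]; simp [Finset.sum_mul]
        _ = ∑ k, B t i k * l k t := by simp [hB]
    calc deriv (l i) t + b t i + ∑ k, B t i k * l k t
        = (∑ j, ginv t i j * ⟪deriv γ t, e j t⟫)
          + ((∑ j, ginv t i j * (∑ m, deriv (l m) t * ⟪e m t, e j t⟫))
            + (∑ j, ginv t i j * (∑ m, l m t * ⟪deriv (e m) t, e j t⟫))) := by
          rw [e1, e2, e3]; ring
      _ = ∑ j, ginv t i j * ⟪deriv (fun u => γ u + ∑ i, l i u • e i u) t, e j t⟫ := by
          rw [← Finset.sum_add_distrib, ← Finset.sum_add_distrib]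
          refine Finset.sum_congr rfl fun j _ => ?_
          rw [hinner t j, Finset.sum_add_distrib]; ring
  constructor
  · intro H t ht i
    have hc : ∀ j, ⟪deriv (fun u => γ u + ∑ i, l i u • e i u) t, e j t⟫ = 0 := fun j =>
      H t ht _ (Submodule.subset_span ⟨j, rfl⟩)
    rw [key t ht i]
    simp [hc]
  · intro H t ht w hw
    have hc : ∀ j, ⟪deriv (fun u => γ u + ∑ i, l i u • e i u) t, e j t⟫ = 0 := by
      intro j
      have hz : ∀ i, ∑ k, ginv t i k
          * ⟪deriv (fun u => γ u + ∑ i, l i u • e i u) t, e k t⟫ = 0 := fun i => by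
        rw [← key t ht i]; exact H t ht i
      calc ⟪deriv (fun u => γ u + ∑ i, l i u • e i u) t, e j t⟫
          = ∑ i, g t j i * (∑ k, ginv t i k
              * ⟪deriv (fun u => γ u + ∑ i, l i u • e i u) t, e k t⟫) :=
            (rolling_aux_mul (g t) (ginv t) (hginv t ht).1
              (fun k => ⟪deriv (fun u => γ u + ∑ i, l i u • e i u) t, e k t⟫) j).symm
        _ = 0 := by simp only [hz, mul_zero, Finset.sum_const_zero]
    obtain ⟨c, rfl⟩ := (Submodule.mem_span_range_iff_exists_fun ℝ).mp hw
    rw [inner_sum]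
    simp only [real_inner_smul_right, hc, mul_zero, Finset.sum_const_zero]
end

section
/- Suppose e₁,…,e_n : J → ℝ^ν is a C¹ moving frame with span T(t), and v(t) = Σᵢ eᵢ(t)·μᵢ(t) with μᵢ : J → ℝ differentiable. Then v'(t) ⊥ T(t) for all t if and only if μᵢ'(t) + Σ_k B_{ik}(t)·μ_k(t) = 0 for all i and t, where B_{ik}(t) = Σ_j ĝ_{ij}(t)·⟨e_j(t), e_k'(t)⟩ and ĝ(t) is the inverse of the Gram matrix g_{ij}(t) = ⟨eᵢ(t), e_j(t)⟩. -/
open scoped RealInnerProductSpace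

/-! Differentiating `v = Σᵢ μᵢ eᵢ` gives `v' = Σᵢ (μᵢ' eᵢ + μᵢ eᵢ')`. Since `T(t)` is spanned by the
`e_j(t)`, `v' ⊥ T` means `⟪v', e_j⟫ = 0` for all `j`, i.e. `g μ' + A μ = 0` with
`A_{jk} = ⟪e_j, e_k'⟫`; multiplying by the inverse Gram matrix `ĝ` turns this into `μ' + B μ = 0`,
where `B = ĝ A`. -/

open Matrix

section MovingFrame

variable {ι E : Type*} [NormedAddCommGroup E] [InnerProductSpace ℝ E]

theorem forall_mem_span_range_inner_eq_zero_iff {e : ι → E} {v : E} :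
    (∀ w ∈ Submodule.span ℝ (Set.range e), ⟪v, w⟫ = 0) ↔ ∀ i, ⟪v, e i⟫ = 0 := by
  simpa [SetLike.le_def, Set.range_subset_iff] using
    Submodule.span_le (p := LinearMap.ker (innerₛₗ ℝ v)) (s := Set.range e)

variable [Fintype ι]

theorem hasDerivAt_sum_smul {μ : ι → ℝ → ℝ} {μ' : ι → ℝ} {e : ι → ℝ → E} {e' : ι → E} {t : ℝ}
    (hμ : ∀ i, HasDerivAt (μ i) (μ' i) t) (he : ∀ i, HasDerivAt (e i) (e' i) t) :
    HasDerivAt (fun u => ∑ i, μ i u • e i u) (∑ i, (μ i t • e' i + μ' i • e i t)) t :=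
  HasDerivAt.fun_sum fun i _ => (hμ i).smul (he i)

theorem inner_sum_smul_add_smul_eq_gram_mulVec_add (μ μ' : ι → ℝ) (e e' : ι → E) (j : ι) :
    ⟪∑ i, (μ i • e' i + μ' i • e i), e j⟫ =
      (gram ℝ e *ᵥ μ' + of (fun j k => ⟪e j, e' k⟫) *ᵥ μ) j := by
  simp only [sum_inner, inner_add_left, real_inner_smul_left, Finset.sum_add_distrib, Pi.add_apply,
    mulVec, dotProduct, gram_apply, of_apply]
  rw [add_comm]
  congr 1 <;> exact Finset.sum_congr rfl fun i _ => by rw [real_inner_comm]; ring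

end MovingFrame

theorem Matrix.mulVec_add_mulVec_eq_zero_iff {m R : Type*} [Fintype m] [DecidableEq m] [Semiring R]
    {G H A : Matrix m m R} (hGH : G * H = 1) (hHG : H * G = 1) (x y : m → R) :
    G *ᵥ x + A *ᵥ y = 0 ↔ x + (H * A) *ᵥ y = 0 := by
  have hfactor : G *ᵥ (x + (H * A) *ᵥ y) = G *ᵥ x + A *ᵥ y := by
    rw [mulVec_add, mulVec_mulVec, ← Matrix.mul_assoc, hGH, Matrix.one_mul]
  rw [← hfactor]
  refine ⟨fun h => ?_, fun h => by rw [h, mulVec_zero]⟩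
  simpa [mulVec_mulVec, hHG] using congrArg (H *ᵥ ·) h

theorem parallel_transport_equations_in_moving_frame_general {ν n : ℕ} (J : Set ℝ)
    (e : Fin n → ℝ → EuclideanSpace ℝ (Fin ν))
    (he : ∀ i, ContDiff ℝ 1 (e i))
    (μ : Fin n → ℝ → ℝ) (hμ : ∀ i, Differentiable ℝ (μ i))
    (g ginv : ℝ → Matrix (Fin n) (Fin n) ℝ)
    (hg : ∀ t, ∀ i j, g t i j = ⟪e i t, e j t⟫)
    (hginv : ∀ t ∈ J, g t * ginv t = 1 ∧ ginv t * g t = 1)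
    (B : ℝ → Matrix (Fin n) (Fin n) ℝ)
    (hB : ∀ t, ∀ i k, B t i k = ∑ j, ginv t i j * ⟪e j t, deriv (e k) t⟫) :
    (∀ t ∈ J, ∀ w ∈ Submodule.span ℝ (Set.range fun i => e i t),
        ⟪deriv (fun u => ∑ i, μ i u • e i u) t, w⟫ = 0) ↔
      (∀ t ∈ J, ∀ i, deriv (μ i) t + ∑ k, B t i k * μ k t = 0) := by
  refine forall₂_congr fun t ht => ?_
  set A := of fun j k => ⟪e j t, deriv (e k) t⟫
  have hgram : g t = gram ℝ (fun i => e i t) := by ext i j; exact hg t i j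
  have hBA : B t = ginv t * A := by ext i k; exact hB t i k
  have hv := hasDerivAt_sum_smul (fun i => (hμ i t).hasDerivAt)
    fun i => ((he i).differentiable one_ne_zero t).hasDerivAt
  rw [forall_mem_span_range_inner_eq_zero_iff, hv.deriv]
  have hcoord : ∀ x : Fin n → ℝ, (∀ i, x i = 0) ↔ x = 0 := fun x => funext_iff.symm
  simp only [inner_sum_smul_add_smul_eq_gram_mulVec_add, ← hgram]
  rw [hcoord, mulVec_add_mulVec_eq_zero_iff (hginv t ht).1 (hginv t ht).2, ← hBA, ← hcoord]
  simp only [Pi.add_apply, mulVec, dotProduct]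

/-- In a C¹ moving frame, a tangent field `v(t) = Σᵢ μᵢ(t)·eᵢ(t)` has velocity
orthogonal to `T(t) = span{eᵢ(t)}` iff `μᵢ' + Σ_k B_{ik}·μ_k = 0`, the
coordinate form of the parallel-transport equation. -/
theorem parallel_transport_equations_in_moving_frame {ν n : ℕ} (J : Set ℝ)
    (hJopen : IsOpen J) (hJconn : J.OrdConnected)
    (e : Fin n → ℝ → EuclideanSpace ℝ (Fin ν))
    (he : ∀ i, ContDiff ℝ 1 (e i))
    (hind : ∀ t ∈ J, LinearIndependent ℝ (fun i => e i t))
    (μ : Fin n → ℝ → ℝ) (hμ : ∀ i, Differentiable ℝ (μ i))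
    (g ginv : ℝ → Matrix (Fin n) (Fin n) ℝ)
    (hg : ∀ t, ∀ i j, g t i j = ⟪e i t, e j t⟫)
    (hginv : ∀ t ∈ J, g t * ginv t = 1 ∧ ginv t * g t = 1)
    (B : ℝ → Matrix (Fin n) (Fin n) ℝ)
    (hB : ∀ t, ∀ i k, B t i k = ∑ j, ginv t i j * ⟪e j t, deriv (e k) t⟫) :
    (∀ t ∈ J, ∀ w ∈ Submodule.span ℝ (Set.range fun i => e i t),
        ⟪deriv (fun u => ∑ i, μ i u • e i u) t, w⟫ = 0) ↔
      (∀ t ∈ J, ∀ i, deriv (μ i) t + ∑ k, B t i k * μ k t = 0) :=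
  parallel_transport_equations_in_moving_frame_general J e he μ hμ g ginv hg hginv B hB
end

section
/- Let e₁,…,e_n : J → ℝ^ν and e₁',…,e_n' : J' → ℝ^ν be two C¹ moving frames for the same family of n-dimensional subspaces T(t) ⊆ ℝ^ν, defined on open intervals J = (a,b) and J' = (a',b') with a < a' < b < b' (so J ∩ J' ≠ ∅). Then there exists a C¹ moving frame e₁'',…,e_n'' : J ∪ J' → ℝ^ν for T(t) on the union J ∪ J'. -/
/-!
On the overlap `(a', b)` the two frames are related by a change-of-basis matrix, `e = e' P`;
`P` is `C¹` because it can be written with the inverse Gram matrix of `e'`, and it is invertible.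
With a cutoff, `P` is deformed into a `C¹` path `M` of invertible matrices that equals `P` near
`a'` and the constant `P c` beyond some point of the overlap: near `c` the interpolation
`P c + χ (P - P c)` stays in a ball of invertible matrices around `P c`. Then `e` on the left
and the frame `e' M` on `(a', b')` agree where both are used, and glue.
-/

open Set Matrix

section ChangeFrame

variable {K V ι : Type*} [Field K] [AddCommGroup V] [Module K V] [Fintype ι]

def changeFrame (v : ι → V) (M : Matrix ι ι K) (i : ι) : V := ∑ j, M j i • v j

theorem changeFrame_eq_linearCombination (v : ι → V) (M : Matrix ι ι K) :
    changeFrame v M = Fintype.linearCombination K v ∘ M.col := by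
  ext i
  simp [changeFrame, Fintype.linearCombination_apply]

theorem changeFrame_changeFrame [DecidableEq ι] (v : ι → V) (M N : Matrix ι ι K) :
    changeFrame (changeFrame v M) N = changeFrame v (M * N) := by
  ext i
  simp only [changeFrame, Finset.smul_sum, smul_smul, Matrix.mul_apply, Finset.sum_smul]
  rw [Finset.sum_comm]
  simp_rw [mul_comm]

theorem changeFrame_one [DecidableEq ι] (v : ι → V) : changeFrame v (1 : Matrix ι ι K) = v := by
  ext i
  simp [changeFrame, Matrix.one_apply]

theorem span_changeFrame_le (v : ι → V) (M : Matrix ι ι K) :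
    Submodule.span K (range (changeFrame v M)) ≤ Submodule.span K (range v) := by
  rw [changeFrame_eq_linearCombination, range_comp, Submodule.span_le]
  rintro _ ⟨x, -, rfl⟩
  rw [← Fintype.range_linearCombination]
  exact LinearMap.mem_range_self _ x

theorem span_changeFrame [DecidableEq ι] {v : ι → V} {M : Matrix ι ι K} (hM : IsUnit M) :
    Submodule.span K (range (changeFrame v M)) = Submodule.span K (range v) := by
  refine (span_changeFrame_le v M).antisymm ?_
  have hv : changeFrame (changeFrame v M) M⁻¹ = v := by
    rw [changeFrame_changeFrame, mul_nonsing_inv _ ((isUnit_iff_isUnit_det M).mp hM),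
      changeFrame_one]
  conv_lhs => rw [← hv]
  exact span_changeFrame_le _ _

theorem linearIndependent_changeFrame_iff [DecidableEq ι] {v : ι → V} {M : Matrix ι ι K}
    (hM : IsUnit M) :
    LinearIndependent K (changeFrame v M) ↔ LinearIndependent K v := by
  rw [linearIndependent_iff_card_eq_finrank_span, linearIndependent_iff_card_eq_finrank_span,
    Set.finrank, Set.finrank, span_changeFrame hM]

theorem isUnit_of_linearIndependent_changeFrame [DecidableEq ι] {v : ι → V} {M : Matrix ι ι K}
    (h : LinearIndependent K (changeFrame v M)) : IsUnit M := by
  rw [changeFrame_eq_linearCombination] at h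
  exact linearIndependent_cols_iff_isUnit.mp h.of_comp

end ChangeFrame

section Gram

variable {𝕜 E ι : Type*} [RCLike 𝕜] [NormedAddCommGroup E] [InnerProductSpace 𝕜 E] [Fintype ι]

theorem inner_changeFrame (w : ι → E) (Q : Matrix ι ι 𝕜) (k i : ι) :
    inner 𝕜 (w k) (changeFrame w Q i) = (gram 𝕜 w * Q) k i := by
  simp [changeFrame, inner_sum, inner_smul_right, Matrix.mul_apply, gram_apply, mul_comm]

theorem changeFrame_gram_inv_mul [DecidableEq ι] {w u : ι → E} (hw : LinearIndependent 𝕜 w)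
    (hu : ∀ i, u i ∈ Submodule.span 𝕜 (range w)) :
    changeFrame w ((gram 𝕜 w)⁻¹ * of fun k i => inner 𝕜 (w k) (u i)) = u := by
  choose Q hQ using fun i => (Submodule.mem_span_range_iff_exists_fun 𝕜).mp (hu i)
  have hu_eq : u = changeFrame w (of fun j i => Q i j) := funext fun i => (hQ i).symm
  have hdet : IsUnit (gram 𝕜 w).det :=
    isUnit_iff_ne_zero.mpr (det_gram_ne_zero_iff_linearIndependent.mpr hw)
  have hinner : (of fun k i => inner 𝕜 (w k) (u i)) = gram 𝕜 w * of fun j i => Q i j := by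
    ext k i
    rw [of_apply, hu_eq, inner_changeFrame]
  rw [hinner, ← Matrix.mul_assoc, nonsing_inv_mul _ hdet, Matrix.one_mul, hu_eq]

end Gram

attribute [local instance] Matrix.normedAddCommGroup Matrix.normedSpace

section MatrixSmooth

variable {𝕜 E ι : Type*} [NontriviallyNormedField 𝕜] [NormedAddCommGroup E] [NormedSpace 𝕜 E]
  [Fintype ι] [DecidableEq ι] {k : WithTop ℕ∞} {s : Set E}

theorem contDiffOn_matrix {m n : Type*} [Fintype m] [Fintype n] {A : E → Matrix m n 𝕜} :
    ContDiffOn 𝕜 k A s ↔ ∀ i j, ContDiffOn 𝕜 k (fun x => A x i j) s :=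
  contDiffOn_pi.trans (forall_congr' fun _ => contDiffOn_pi)

theorem ContDiffOn.matrix_det {A : E → Matrix ι ι 𝕜} (hA : ContDiffOn 𝕜 k A s) :
    ContDiffOn 𝕜 k (fun x => (A x).det) s := by
  simp only [det_apply, Units.smul_def, zsmul_eq_mul]
  exact ContDiffOn.sum fun σ _ => contDiffOn_const.mul <|
    contDiffOn_prod fun i _ => contDiffOn_matrix.mp hA _ _

theorem ContDiffOn.matrix_adjugate {A : E → Matrix ι ι 𝕜} (hA : ContDiffOn 𝕜 k A s) :
    ContDiffOn 𝕜 k (fun x => (A x).adjugate) s := by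
  refine contDiffOn_matrix.mpr fun i j => ?_
  simp only [adjugate_apply]
  refine ContDiffOn.matrix_det (contDiffOn_matrix.mpr fun l m => ?_)
  simp only [updateRow_apply]
  split_ifs
  · exact contDiffOn_const
  · exact contDiffOn_matrix.mp hA l m

theorem ContDiffOn.matrix_inv {A : E → Matrix ι ι 𝕜} (hA : ContDiffOn 𝕜 k A s)
    (hdet : ∀ x ∈ s, (A x).det ≠ 0) : ContDiffOn 𝕜 k (fun x => (A x)⁻¹) s := by
  simp only [inv_def, Ring.inverse_eq_inv]
  exact (hA.matrix_det.inv hdet).smul hA.matrix_adjugate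

theorem ContDiffOn.matrix_mul {l m n : Type*} [Fintype l] [Fintype m] [Fintype n]
    {A : E → Matrix l m 𝕜} {B : E → Matrix m n 𝕜} (hA : ContDiffOn 𝕜 k A s)
    (hB : ContDiffOn 𝕜 k B s) : ContDiffOn 𝕜 k (fun x => A x * B x) s := by
  refine contDiffOn_matrix.mpr fun i j => ?_
  simp only [mul_apply]
  exact ContDiffOn.sum fun c _ =>
    (contDiffOn_matrix.mp hA i c).mul (contDiffOn_matrix.mp hB c j)

theorem Matrix.isOpen_setOf_isUnit : IsOpen {A : Matrix ι ι 𝕜 | IsUnit A} := by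
  simp only [isUnit_iff_isUnit_det, isUnit_iff_ne_zero]
  exact isOpen_ne.preimage continuous_id.matrix_det

end MatrixSmooth

theorem ContDiffOn.exists_Ioi_extension_mapsTo {F : Type*} [NormedAddCommGroup F]
    [NormedSpace ℝ F] {k : ℕ∞} {P : ℝ → F} {p q : ℝ} {U : Set F} (hpq : p < q)
    (hP : ContDiffOn ℝ k P (Ioo p q)) (hU : IsOpen U) (hPU : MapsTo P (Ioo p q) U) :
    ∃ M : ℝ → F, ∃ r ∈ Ioo p q, ContDiffOn ℝ k M (Ioi p) ∧ MapsTo M (Ioi p) U ∧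
      EqOn M P (Ioo p r) := by
  obtain ⟨c, hc⟩ := nonempty_Ioo.mpr hpq
  obtain ⟨ε, hε, hball⟩ := Metric.isOpen_iff.mp hU _ (hPU hc)
  have hcont : ContinuousAt P c := hP.continuousOn.continuousAt (isOpen_Ioo.mem_nhds hc)
  obtain ⟨δ₀, hδ₀, hδ₀P⟩ :=
    Metric.eventually_nhds_iff.mp (hcont.eventually (Metric.ball_mem_nhds _ hε))
  set δ := min δ₀ (min (c - p) (q - c))
  have hδ : 0 < δ := lt_min hδ₀ (lt_min (by linarith [hc.1]) (by linarith [hc.2]))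
  have hδδ₀ : δ ≤ δ₀ := min_le_left _ _
  have hδp : δ ≤ c - p := (min_le_right _ _).trans (min_le_left _ _)
  have hδq : δ ≤ q - c := (min_le_right _ _).trans (min_le_right _ _)
  set χ : ℝ → ℝ := fun t => Real.smoothTransition ((c + δ / 2 - t) / δ)
  have hχ_one : ∀ t ≤ c - δ / 2, χ t = 1 := fun t ht =>
    Real.smoothTransition.one_of_one_le (by rw [le_div_iff₀ hδ]; linarith)
  have hχ_zero : ∀ t ≥ c + δ / 2, χ t = 0 := fun t ht =>
    Real.smoothTransition.zero_of_nonpos (div_nonpos_of_nonpos_of_nonneg (by linarith) hδ.le)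
  have hχ : ContDiff ℝ k χ :=
    Real.smoothTransition.contDiff.comp ((contDiff_const.sub contDiff_id).div_const _)
  refine ⟨fun t => P c + χ t • (P t - P c), c - δ / 2, ⟨by linarith, by linarith⟩, ?_, ?_, ?_⟩
  · have hconst : ContDiffOn ℝ k (fun t => P c + χ t • (P t - P c)) (Ioi (c + δ / 2)) :=
      (contDiffOn_const (c := P c)).congr fun t ht => by simp [hχ_zero t (le_of_lt ht)]
    have hmid : ContDiffOn ℝ k (fun t => P c + χ t • (P t - P c)) (Ioo p q) :=
      contDiffOn_const.add (hχ.contDiffOn.smul (hP.sub contDiffOn_const))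
    refine (hmid.union_of_isOpen hconst isOpen_Ioo isOpen_Ioi).mono fun t (ht : p < t) => ?_
    by_cases h : t < q
    · exact Or.inl ⟨ht, h⟩
    · exact Or.inr (show c + δ / 2 < t by linarith)
  · intro t (ht : p < t)
    rcases le_or_gt t (c - δ) with h | h
    · simpa [hχ_one t (by linarith)] using hPU ⟨ht, by linarith⟩
    rcases le_or_gt (c + δ) t with h' | h'
    · simpa [hχ_zero t (by linarith)] using hPU hc
    -- `P t` and `P c` lie in a ball inside `U`, and balls are convex.
    have hPt : P t ∈ Metric.ball (P c) ε :=
      hδ₀P (by rw [Real.dist_eq, abs_lt]; constructor <;> linarith)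
    exact hball <| (convex_ball _ _).add_smul_sub_mem (Metric.mem_ball_self hε) hPt
      ⟨Real.smoothTransition.nonneg _, Real.smoothTransition.le_one _⟩
  · intro t ht
    simp [hχ_one t ht.2.le]

section MovingFrame

variable {V ι : Type*} [NormedAddCommGroup V] [InnerProductSpace ℝ V] {k : WithTop ℕ∞}
  {T : ℝ → Submodule ℝ V} {e e' : ι → ℝ → V} {s u : Set ℝ}

def IsMovingFrame (k : WithTop ℕ∞) (T : ℝ → Submodule ℝ V) (e : ι → ℝ → V) (s : Set ℝ) :
    Prop :=
  (∀ i, ContDiffOn ℝ k (e i) s) ∧ ∀ t ∈ s, LinearIndependent ℝ (fun i => e i t) ∧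
    Submodule.span ℝ (range fun i => e i t) = T t

namespace IsMovingFrame

theorem mono (he : IsMovingFrame k T e s) (hus : u ⊆ s) : IsMovingFrame k T e u :=
  ⟨fun i => (he.1 i).mono hus, fun t ht => he.2 t (hus ht)⟩

theorem congr (he : IsMovingFrame k T e s) (h : ∀ t ∈ s, ∀ i, e' i t = e i t) :
    IsMovingFrame k T e' s := by
  refine ⟨fun i => (he.1 i).congr fun t ht => h t ht i, fun t ht => ?_⟩
  rw [show (fun i => e' i t) = fun i => e i t from funext (h t ht)]
  exact he.2 t ht

theorem union (hs : IsMovingFrame k T e s) (hu : IsMovingFrame k T e u) (hs_open : IsOpen s)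
    (hu_open : IsOpen u) : IsMovingFrame k T e (s ∪ u) :=
  ⟨fun i => (hs.1 i).union_of_isOpen (hu.1 i) hs_open hu_open, fun t ht =>
    ht.elim (hs.2 t) (hu.2 t)⟩

theorem exists_union (he : IsMovingFrame k T e s) (he' : IsMovingFrame k T e' u)
    (hs : IsOpen s) (hu : IsOpen u) (h : ∀ t ∈ s ∩ u, ∀ i, e i t = e' i t) :
    ∃ g : ι → ℝ → V, IsMovingFrame k T g (s ∪ u) := by
  classical
  refine ⟨fun i => u.piecewise (e' i) (e i), (he.congr fun t ht i => ?_).union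
    (he'.congr fun t ht i => piecewise_eq_of_mem _ _ _ ht) hs hu⟩
  by_cases htu : t ∈ u
  · rw [piecewise_eq_of_mem _ _ _ htu, h t ⟨ht, htu⟩]
  · exact piecewise_eq_of_notMem _ _ _ htu

end IsMovingFrame

variable [Fintype ι] [DecidableEq ι]

theorem IsMovingFrame.changeFrame {M : ℝ → Matrix ι ι ℝ} (he : IsMovingFrame k T e s)
    (hM : ContDiffOn ℝ k M s) (hunit : ∀ t ∈ s, IsUnit (M t)) :
    IsMovingFrame k T (fun i t => changeFrame (fun j => e j t) (M t) i) s := by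
  refine ⟨fun i => ContDiffOn.sum fun j _ => (contDiffOn_matrix.mp hM j i).smul (he.1 j),
    fun t ht => ?_⟩
  rw [linearIndependent_changeFrame_iff (hunit t ht), span_changeFrame (hunit t ht)]
  exact he.2 t ht

/-- The change-of-basis matrix `P t` with `e t = e' t P t`, made explicit through the Gram matrix
of `e' t`. -/
noncomputable def frameTransition (e e' : ι → ℝ → V) (t : ℝ) : Matrix ι ι ℝ :=
  (gram ℝ fun j => e' j t)⁻¹ * of fun k i => inner ℝ (e' k t) (e i t)

theorem changeFrame_frameTransition (he : IsMovingFrame k T e s) (he' : IsMovingFrame k T e' s)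
    {t : ℝ} (ht : t ∈ s) :
    changeFrame (fun j => e' j t) (frameTransition e e' t) = fun i => e i t :=
  changeFrame_gram_inv_mul (he'.2 t ht).1 fun i => by
    rw [(he'.2 t ht).2, ← (he.2 t ht).2]
    exact Submodule.subset_span (mem_range_self i)

theorem isUnit_frameTransition (he : IsMovingFrame k T e s) (he' : IsMovingFrame k T e' s)
    {t : ℝ} (ht : t ∈ s) : IsUnit (frameTransition e e' t) := by
  refine isUnit_of_linearIndependent_changeFrame (v := fun j => e' j t) ?_
  rw [changeFrame_frameTransition he he' ht]
  exact (he.2 t ht).1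

theorem contDiffOn_frameTransition (he : IsMovingFrame k T e s) (he' : IsMovingFrame k T e' s) :
    ContDiffOn ℝ k (frameTransition e e') s := by
  have hinner {f g : ι → ℝ → V} (hf : ∀ i, ContDiffOn ℝ k (f i) s)
      (hg : ∀ i, ContDiffOn ℝ k (g i) s) :
      ContDiffOn ℝ k (fun t => of fun j i => inner ℝ (f j t) (g i t)) s :=
    contDiffOn_matrix.mpr fun j i => (hf j).inner ℝ (hg i)
  refine ContDiffOn.matrix_mul (ContDiffOn.matrix_inv (hinner he'.1 he'.1) fun t ht => ?_)
    (hinner he'.1 he.1)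
  exact det_gram_ne_zero_iff_linearIndependent.mpr (he'.2 t ht).1

theorem IsMovingFrame.exists_glue {k : ℕ∞} {a b a' b' : ℝ} (ha : a < a') (hab : a' < b)
    (hb : b < b') (he : IsMovingFrame k T e (Ioo a b)) (he' : IsMovingFrame k T e' (Ioo a' b')) :
    ∃ g : ι → ℝ → V, IsMovingFrame k T g (Ioo a b') := by
  have hO : IsMovingFrame k T e (Ioo a' b) := he.mono (Ioo_subset_Ioo_left ha.le)
  have hO' : IsMovingFrame k T e' (Ioo a' b) := he'.mono (Ioo_subset_Ioo_right hb.le)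
  obtain ⟨M, r, hr, hM, hMunit, hMP⟩ :=
    (contDiffOn_frameTransition hO hO').exists_Ioi_extension_mapsTo hab
      Matrix.isOpen_setOf_isUnit fun t ht => isUnit_frameTransition hO hO' ht
  have hF := he'.changeFrame (hM.mono Ioo_subset_Ioi_self) fun t ht => hMunit ht.1
  obtain ⟨g, hg⟩ := (he.mono (Ioo_subset_Ioo_right hr.2.le)).exists_union hF
    isOpen_Ioo isOpen_Ioo fun t ⟨⟨_, htr⟩, ht'⟩ i => by
      have htO : t ∈ Ioo a' b := ⟨ht'.1, htr.trans hr.2⟩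
      rw [hMP ⟨ht'.1, htr⟩, changeFrame_frameTransition hO hO' htO]
  refine ⟨g, hg.mono fun t ht => ?_⟩
  by_cases htr : t < r
  · exact Or.inl ⟨ht.1, htr⟩
  · exact Or.inr ⟨hr.1.trans_le (not_lt.mp htr), ht.2⟩

end MovingFrame

/-- Gluing of moving frames: two C¹ moving frames for the same family of
subspaces `T t`, defined on overlapping open intervals `(a,b)` and `(a',b')`
with `a < a' < b < b'`, can be combined into a C¹ moving frame on the union
`(a,b')`. -/
theorem moving_frames_glue {ν n : ℕ} (a b a' b' : ℝ)
    (h1 : a < a') (h2 : a' < b) (h3 : b < b')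
    (T : ℝ → Submodule ℝ (EuclideanSpace ℝ (Fin ν)))
    (e e' : Fin n → ℝ → EuclideanSpace ℝ (Fin ν))
    (he : ∀ i, ContDiffOn ℝ 1 (e i) (Set.Ioo a b))
    (he' : ∀ i, ContDiffOn ℝ 1 (e' i) (Set.Ioo a' b'))
    (hfr : ∀ t ∈ Set.Ioo a b, LinearIndependent ℝ (fun i => e i t) ∧
      Submodule.span ℝ (Set.range fun i => e i t) = T t)
    (hfr' : ∀ t ∈ Set.Ioo a' b', LinearIndependent ℝ (fun i => e' i t) ∧
      Submodule.span ℝ (Set.range fun i => e' i t) = T t) :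
    ∃ e'' : Fin n → ℝ → EuclideanSpace ℝ (Fin ν),
      (∀ i, ContDiffOn ℝ 1 (e'' i) (Set.Ioo a b')) ∧
      ∀ t ∈ Set.Ioo a b', LinearIndependent ℝ (fun i => e'' i t) ∧
        Submodule.span ℝ (Set.range fun i => e'' i t) = T t :=
  IsMovingFrame.exists_glue (k := 1) h1 h2 h3 ⟨he, hfr⟩ ⟨he', hfr'⟩
end

section
/- Let γ : I → M ⊆ ℝ^ν be a regular C² curve on a C² submanifold, fix t ∈ I, and let γ̂_t : I → H_t be the trace curve of γ in the affine tangent space H_t = γ(t) + T_{γ(t)}M determined by the rolling tangent space. Then P(s,t)(γ̂_t'(s)) = γ'(s) and P(s,t)(γ̂_t''(s)) = π(γ''(s)), where P(s,t) : T_{γ(t)}M → T_{γ(s)}M is the parallel transport map and π is the orthogonal projection of ℝ^ν onto T_{γ(s)}M. -/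
open scoped RealInnerProductSpace

open Filter Topology

/-! `Φ(s,σ)` maps `γ(σ)` to the point `γ̂_s(σ)` of `H_s`, so `γ(σ) = Φ(σ,s)(γ̂_s(σ))`. Pairing this
with a parallel field `P(σ,s) w`, `w ∈ T_{γ(s)}M`, and using that `P(σ,s)` is an isometry on
`T_{γ(s)}M` whose derivative, like that of `σ ↦ Φ(σ,s)(x)`, is normal to `T_{γ(σ)}M`, one gets
`⟪γ'(σ), P(σ,s) w⟫ = ⟪γ̂_s'(σ), w⟫`. At `σ = s` this identifies `γ̂_s'(s)` with `γ'(s)`;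
differentiating once more identifies `γ̂_s''(s)` with the tangential part of `γ''(s)`. Finally
`Φ(s,t)` is an affine map carrying `γ̂_t` to `γ̂_s`, with linear part `P(s,t)`. -/

variable {E : Type*}

theorem HasDerivAt.mem_of_eventually_sub_mem [NormedAddCommGroup E] [NormedSpace ℝ E]
    {K : Submodule ℝ E} (hK : IsClosed (K : Set E)) {f : ℝ → E} {f' c : E} {x : ℝ}
    (hf : HasDerivAt f f' x) (h : ∀ᶠ y in 𝓝 x, f y - c ∈ K) : f' ∈ K := by
  refine hK.mem_of_tendsto (hasDerivAt_iff_tendsto_slope.mp hf) ?_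
  have hx : f x - c ∈ K := h.self_of_nhds
  filter_upwards [nhdsWithin_le_nhds h] with y hy
  rw [slope_def_module]
  simpa using K.smul_mem _ (K.sub_mem hy hx)

variable [NormedAddCommGroup E] [InnerProductSpace ℝ E]

theorem inner_eq_of_deriv_mem_orthogonal {I : Set ℝ} (hI : IsOpen I) (hIc : I.OrdConnected)
    {T : ℝ → Submodule ℝ E} {u v : ℝ → E}
    (hu : ∀ r ∈ I, DifferentiableAt ℝ u r) (hv : ∀ r ∈ I, DifferentiableAt ℝ v r)
    (huT : ∀ r ∈ I, u r ∈ T r) (hvT : ∀ r ∈ I, v r ∈ T r)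
    (hu' : ∀ r ∈ I, deriv u r ∈ (T r)ᗮ) (hv' : ∀ r ∈ I, deriv v r ∈ (T r)ᗮ)
    {σ τ : ℝ} (hσ : σ ∈ I) (hτ : τ ∈ I) : ⟪u σ, v σ⟫ = ⟪u τ, v τ⟫ := by
  refine hI.is_const_of_deriv_eq_zero hIc.isPreconnected
    (fun r hr => ((hu r hr).inner ℝ (hv r hr)).differentiableWithinAt) (fun r hr => ?_) hσ hτ
  rw [deriv_inner_apply _ (hu r hr) (hv r hr), Pi.zero_apply,
    Submodule.inner_right_of_mem_orthogonal (huT r hr) (hv' r hr),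
    Submodule.inner_left_of_mem_orthogonal (hvT r hr) (hu' r hr), add_zero]

theorem Submodule.starProjection_eq_of_inner_eq {K : Submodule ℝ E} [K.HasOrthogonalProjection]
    {u v : E} (hv : v ∈ K) (h : ∀ w ∈ K, ⟪u, w⟫ = ⟪v, w⟫) : K.starProjection u = v :=
  K.eq_starProjection_of_mem_of_inner_eq_zero hv fun w hw => by
    rw [inner_sub_left, h w hw, sub_self]

/-- The axioms of the rolling tangent space maps `Φ(t,s) : H_s → H_t` along `γ`, with
`T s = T_{γ(s)}M` and `H_s = γ(s) + T s`. -/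
structure IsRollingFamily (I : Set ℝ) (γ : ℝ → E) (T : ℝ → Submodule ℝ E)
    (Φ : ℝ → ℝ → E → E) (P : ℝ → ℝ → E →ₗ[ℝ] E) : Prop where
  apply_self : ∀ s x, Φ s s x = x
  comp_apply : ∀ s t u x, Φ u t (Φ t s x) = Φ u s x
  apply_sub_mem : ∀ s ∈ I, ∀ t ∈ I, ∀ x, x - γ s ∈ T s → Φ t s x - γ t ∈ T t
  map_add : ∀ s t x v, Φ t s (x + v) = Φ t s x + P t s v
  differentiable : ∀ s ∈ I, ∀ x, Differentiable ℝ (fun r => Φ r s x)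
  inner_deriv_eq_zero : ∀ s ∈ I, ∀ x, x - γ s ∈ T s →
    ∀ u ∈ I, ∀ w ∈ T u, ⟪deriv (fun r => Φ r s x) u, w⟫ = 0

/-- The trace curve `γ̂_t(σ) = Φ(t,σ)(γ(σ))`. -/
def traceCurve (Φ : ℝ → ℝ → E → E) (γ : ℝ → E) (t : ℝ) : ℝ → E := fun σ => Φ t σ (γ σ)

namespace IsRollingFamily

variable {I : Set ℝ} {γ : ℝ → E} {T : ℝ → Submodule ℝ E} {Φ : ℝ → ℝ → E → E}
  {P : ℝ → ℝ → E →ₗ[ℝ] E} (hΦ : IsRollingFamily I γ T Φ P)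
include hΦ

theorem transport_eq_sub (s r : ℝ) (x w : E) : P r s w = Φ r s (x + w) - Φ r s x := by
  rw [hΦ.map_add, add_sub_cancel_left]

theorem transport_self (s : ℝ) (w : E) : P s s w = w := by
  rw [hΦ.transport_eq_sub s s 0, hΦ.apply_self, hΦ.apply_self, zero_add, sub_zero]

theorem deriv_mem_orthogonal {s r : ℝ} (hs : s ∈ I) (hr : r ∈ I) {x : E} (hx : x - γ s ∈ T s) :
    deriv (fun q => Φ q s x) r ∈ (T r)ᗮ :=
  (Submodule.mem_orthogonal' _ _).2 (hΦ.inner_deriv_eq_zero s hs x hx r hr)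

theorem transport_mem {s r : ℝ} (hs : s ∈ I) (hr : r ∈ I) {w : E} (hw : w ∈ T s) :
    P r s w ∈ T r := by
  rw [hΦ.transport_eq_sub s r (γ s), ← sub_sub_sub_cancel_right _ _ (γ r)]
  exact sub_mem (hΦ.apply_sub_mem s hs r hr _ (by simpa)) (hΦ.apply_sub_mem s hs r hr _ (by simp))

theorem differentiableAt_transport {s : ℝ} (hs : s ∈ I) (w : E) (r : ℝ) :
    DifferentiableAt ℝ (fun q => P q s w) r := by
  simp only [hΦ.transport_eq_sub s _ (γ s) w]
  exact (hΦ.differentiable s hs _ r).sub (hΦ.differentiable s hs _ r)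

theorem deriv_transport_mem_orthogonal {s r : ℝ} (hs : s ∈ I) (hr : r ∈ I) {w : E}
    (hw : w ∈ T s) : deriv (fun q => P q s w) r ∈ (T r)ᗮ := by
  simp only [hΦ.transport_eq_sub s _ (γ s) w]
  rw [deriv_fun_sub (hΦ.differentiable s hs _ r) (hΦ.differentiable s hs _ r)]
  exact sub_mem (hΦ.deriv_mem_orthogonal hs hr (by simpa)) (hΦ.deriv_mem_orthogonal hs hr (by simp))

theorem inner_transport (hI : IsOpen I) (hIc : I.OrdConnected) {s r : ℝ} (hs : s ∈ I)
    (hr : r ∈ I) {a b : E} (ha : a ∈ T s) (hb : b ∈ T s) : ⟪P r s a, P r s b⟫ = ⟪a, b⟫ := by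
  rw [inner_eq_of_deriv_mem_orthogonal hI hIc (T := T)
    (fun q _ => hΦ.differentiableAt_transport hs a q)
    (fun q _ => hΦ.differentiableAt_transport hs b q)
    (fun q hq => hΦ.transport_mem hs hq ha) (fun q hq => hΦ.transport_mem hs hq hb)
    (fun q hq => hΦ.deriv_transport_mem_orthogonal hs hq ha)
    (fun q hq => hΦ.deriv_transport_mem_orthogonal hs hq hb) hr hs,
    hΦ.transport_self, hΦ.transport_self]

theorem apply_traceCurve (s u r : ℝ) : Φ u s (traceCurve Φ γ s r) = traceCurve Φ γ u r :=
  hΦ.comp_apply r s u (γ r)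

theorem apply_traceCurve_self (s r : ℝ) : Φ r s (traceCurve Φ γ s r) = γ r := by
  rw [hΦ.apply_traceCurve, traceCurve, hΦ.apply_self]

theorem traceCurve_sub_mem {s r : ℝ} (hs : s ∈ I) (hr : r ∈ I) :
    traceCurve Φ γ s r - γ s ∈ T s :=
  hΦ.apply_sub_mem r hr s hs _ (by simp)

theorem traceCurve_eq_add_transport (s t : ℝ) :
    traceCurve Φ γ s = fun r => γ s + P s t (traceCurve Φ γ t r - traceCurve Φ γ t s) := by
  funext r
  rw [← hΦ.apply_traceCurve_self t s, ← hΦ.map_add, add_sub_cancel, hΦ.apply_traceCurve]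

theorem hasDerivAt_traceCurve_of_hasDerivAt [FiniteDimensional ℝ E] {s t r : ℝ} {v : E}
    (h : HasDerivAt (traceCurve Φ γ t) v r) : HasDerivAt (traceCurve Φ γ s) (P s t v) r := by
  rw [hΦ.traceCurve_eq_add_transport s t]
  exact ((P s t).toContinuousLinearMap.hasFDerivAt.comp_hasDerivAt r (h.sub_const _)).const_add _

theorem mem_of_hasDerivAt_traceCurve [FiniteDimensional ℝ E] (hI : IsOpen I) {s r : ℝ}
    (hs : s ∈ I) (hr : r ∈ I) {v : E} (h : HasDerivAt (traceCurve Φ γ s) v r) : v ∈ T s :=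
  h.mem_of_eventually_sub_mem (T s).closed_of_finiteDimensional
    (eventually_of_mem (hI.mem_nhds hr) fun _ hq => hΦ.traceCurve_sub_mem hs hq)

theorem inner_deriv_transport [FiniteDimensional ℝ E] (hI : IsOpen I) (hIc : I.OrdConnected)
    {s r : ℝ} (hs : s ∈ I) (hr : r ∈ I) (hγ : DifferentiableAt ℝ γ r) {v : E}
    (hv : HasDerivAt (traceCurve Φ γ s) v r) {w : E} (hw : w ∈ T s) :
    ⟪deriv γ r, P r s w⟫ = ⟪v, w⟫ := by
  set x := traceCurve Φ γ s r
  -- `γ q = Φ(q,s)(x) + P(q,s)(γ̂_s(q) - x)` near `r`, and `P(q,s)` preserves the pairing with `w`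
  have hsplit : ∀ q ∈ I, ⟪γ q, P q s w⟫ = ⟪Φ q s x, P q s w⟫ + ⟪traceCurve Φ γ s q - x, w⟫ := by
    intro q hq
    have hmem : traceCurve Φ γ s q - x ∈ T s := by
      simpa using sub_mem (hΦ.traceCurve_sub_mem hs hq) (hΦ.traceCurve_sub_mem hs hr)
    rw [← hΦ.inner_transport hI hIc hs hq hmem hw, ← inner_add_left, ← hΦ.map_add,
      add_sub_cancel, hΦ.apply_traceCurve_self]
  have hPw := (hΦ.differentiableAt_transport hs w r).hasDerivAt
  have hlhs := hγ.hasDerivAt.inner ℝ hPw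
  have hrhs := ((hΦ.differentiable s hs x r).hasDerivAt.inner ℝ hPw).add
    ((hv.sub_const x).inner ℝ (hasDerivAt_const r w))
  have heq := hlhs.unique
    (hrhs.congr_of_eventuallyEq (eventuallyEq_of_mem (hI.mem_nhds hr) hsplit))
  rw [hΦ.apply_traceCurve_self, hΦ.inner_deriv_eq_zero s hs x (hΦ.traceCurve_sub_mem hs hr) r hr _
    (hΦ.transport_mem hs hr hw), inner_zero_right] at heq
  linarith

theorem eq_deriv_of_hasDerivAt_traceCurve [FiniteDimensional ℝ E] (hI : IsOpen I)
    (hIc : I.OrdConnected) {s : ℝ} (hs : s ∈ I) (hγ : DifferentiableAt ℝ γ s)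
    (htan : deriv γ s ∈ T s) {v : E}
    (hv : HasDerivAt (traceCurve Φ γ s) v s) : v = deriv γ s := by
  rw [← (T s).starProjection_eq_self_iff.2 htan]
  refine ((T s).starProjection_eq_of_inner_eq (hΦ.mem_of_hasDerivAt_traceCurve hI hs hs hv)
    fun w hw => ?_).symm
  rw [← hΦ.inner_deriv_transport hI hIc hs hs hγ hv hw, hΦ.transport_self]

theorem eq_starProjection_of_hasDerivAt_deriv_traceCurve [FiniteDimensional ℝ E] (hI : IsOpen I)
    (hIc : I.OrdConnected) {s : ℝ} (hs : s ∈ I) (hγ : ∀ r ∈ I, DifferentiableAt ℝ γ r)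
    (hγ' : DifferentiableAt ℝ (deriv γ) s) (htan : deriv γ s ∈ T s)
    (hγt : ∀ r ∈ I, DifferentiableAt ℝ (traceCurve Φ γ s) r) {a : E}
    (ha : HasDerivAt (deriv (traceCurve Φ γ s)) a s) :
    a = (T s).starProjection (deriv (deriv γ) s) := by
  have hmem : a ∈ T s := ha.mem_of_eventually_sub_mem (c := 0) (T s).closed_of_finiteDimensional
    (eventually_of_mem (hI.mem_nhds hs) fun r hr => by
      simpa using hΦ.mem_of_hasDerivAt_traceCurve hI hs hr (hγt r hr).hasDerivAt)
  refine ((T s).starProjection_eq_of_inner_eq hmem fun w hw => ?_).symm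
  have hPw := (hΦ.differentiableAt_transport hs w s).hasDerivAt
  have heq := (hγ'.hasDerivAt.inner ℝ hPw).unique
    ((ha.inner ℝ (hasDerivAt_const s w)).congr_of_eventuallyEq
      (eventuallyEq_of_mem (hI.mem_nhds hs) fun r hr =>
        hΦ.inner_deriv_transport hI hIc hs hr (hγ r hr) (hγt r hr).hasDerivAt hw))
  rwa [Submodule.inner_right_of_mem_orthogonal htan (hΦ.deriv_transport_mem_orthogonal hs hs hw),
    hΦ.transport_self, inner_zero_right, zero_add, zero_add] at heq

end IsRollingFamily

theorem trace_curve_derivatives_general {ν : ℕ} (I : Set ℝ)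
    (hIopen : IsOpen I) (hIconn : I.OrdConnected)
    (γ : ℝ → EuclideanSpace ℝ (Fin ν)) (hγ : ContDiff ℝ 2 γ)
    (T : ℝ → Submodule ℝ (EuclideanSpace ℝ (Fin ν)))
    (htan : ∀ s ∈ I, deriv γ s ∈ T s)
    (Φ : ℝ → ℝ → EuclideanSpace ℝ (Fin ν) → EuclideanSpace ℝ (Fin ν))
    (P : ℝ → ℝ → EuclideanSpace ℝ (Fin ν) →ₗ[ℝ] EuclideanSpace ℝ (Fin ν))
    (hinit : ∀ s x, Φ s s x = x)
    (hgroup : ∀ s t u x, Φ u t (Φ t s x) = Φ u s x)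
    (hmem : ∀ s ∈ I, ∀ t ∈ I, ∀ x, x - γ s ∈ T s → Φ t s x - γ t ∈ T t)
    (haff : ∀ s t x v, Φ t s (x + v) = Φ t s x + P t s v)
    (hΦdiff : ∀ s ∈ I, ∀ x, Differentiable ℝ (fun r => Φ r s x))
    (hroll : ∀ s ∈ I, ∀ x, x - γ s ∈ T s →
      ∀ u ∈ I, ∀ w ∈ T u, ⟪deriv (fun r => Φ r s x) u, w⟫ = 0)
    (t : ℝ)
    (hγh : ContDiff ℝ 2 (fun s => Φ t s (γ s))) :
    ∀ s ∈ I,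
      P s t (deriv (fun σ => Φ t σ (γ σ)) s) = deriv γ s ∧
      P s t (deriv (deriv (fun σ => Φ t σ (γ σ))) s) =
        (Submodule.orthogonalProjection (T s) (deriv (deriv γ) s) :
          EuclideanSpace ℝ (Fin ν)) := by
  intro s hs
  have hΦ : IsRollingFamily I γ T Φ P := ⟨hinit, hgroup, hmem, haff, hΦdiff, hroll⟩
  have hγt : ContDiff ℝ 2 (traceCurve Φ γ t) := hγh
  have hd : ∀ r, HasDerivAt (traceCurve Φ γ s) (P s t (deriv (traceCurve Φ γ t) r)) r :=
    fun r => hΦ.hasDerivAt_traceCurve_of_hasDerivAt ((hγt.differentiable two_ne_zero r).hasDerivAt)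
  have hdd : HasDerivAt (deriv (traceCurve Φ γ s))
      (P s t (deriv (deriv (traceCurve Φ γ t)) s)) s := by
    rw [funext fun r => (hd r).deriv]
    exact (P s t).toContinuousLinearMap.hasFDerivAt.comp_hasDerivAt s
      (hγt.differentiable_deriv_two s).hasDerivAt
  have hγ₁ : Differentiable ℝ γ := hγ.differentiable two_ne_zero
  refine ⟨(hΦ.eq_deriv_of_hasDerivAt_traceCurve hIopen hIconn hs (hγ₁ s) (htan s hs) (hd s)), ?_⟩
  rw [← Submodule.starProjection_apply]
  exact hΦ.eq_starProjection_of_hasDerivAt_deriv_traceCurve hIopen hIconn hs (fun r _ => hγ₁ r)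
    (hγ.differentiable_deriv_two s) (htan s hs) (fun r _ => (hd r).differentiableAt) hdd

/-- For the trace curve `γ̂_t(s) = Φ(t,s)(γ(s))` of the rolling tangent space,
parallel transport sends its first derivative to `γ'(s)` and its second
derivative to the orthogonal projection of `γ''(s)` onto the tangent space. -/
theorem trace_curve_derivatives {ν : ℕ} (I : Set ℝ)
    (hIopen : IsOpen I) (hIconn : I.OrdConnected)
    (γ : ℝ → EuclideanSpace ℝ (Fin ν)) (hγ : ContDiff ℝ 2 γ)
    (hreg : ∀ s ∈ I, deriv γ s ≠ 0)
    (T : ℝ → Submodule ℝ (EuclideanSpace ℝ (Fin ν)))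
    (htan : ∀ s ∈ I, deriv γ s ∈ T s)
    (Φ : ℝ → ℝ → EuclideanSpace ℝ (Fin ν) → EuclideanSpace ℝ (Fin ν))
    (P : ℝ → ℝ → EuclideanSpace ℝ (Fin ν) →ₗ[ℝ] EuclideanSpace ℝ (Fin ν))
    (hinit : ∀ s x, Φ s s x = x)
    (hgroup : ∀ s t u x, Φ u t (Φ t s x) = Φ u s x)
    (hmem : ∀ s ∈ I, ∀ t ∈ I, ∀ x, x - γ s ∈ T s → Φ t s x - γ t ∈ T t)
    (haff : ∀ s t x v, Φ t s (x + v) = Φ t s x + P t s v)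
    (hΦdiff : ∀ s ∈ I, ∀ x, Differentiable ℝ (fun r => Φ r s x))
    (hroll : ∀ s ∈ I, ∀ x, x - γ s ∈ T s →
      ∀ u ∈ I, ∀ w ∈ T u, ⟪deriv (fun r => Φ r s x) u, w⟫ = 0)
    (t : ℝ) (ht : t ∈ I)
    (hγh : ContDiff ℝ 2 (fun s => Φ t s (γ s))) :
    ∀ s ∈ I,
      P s t (deriv (fun σ => Φ t σ (γ σ)) s) = deriv γ s ∧
      P s t (deriv (deriv (fun σ => Φ t σ (γ σ))) s) =
        (Submodule.orthogonalProjection (T s) (deriv (deriv γ) s) :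
          EuclideanSpace ℝ (Fin ν)) :=
  trace_curve_derivatives_general I hIopen hIconn γ hγ T htan Φ P hinit hgroup hmem haff hΦdiff
    hroll t hγh
end

section
/- Let H_t be a family of affine subspaces of ℝ^ν with rolling maps Φ(t,s) : H_s → H_t (affine isometries obeying Φ(u,t)∘Φ(t,s) = Φ(u,s), with ∂_u Φ(u,t)(x) orthogonal to the direction space of H_u for each fixed x). If f : I → H_t is C¹ and g(s) = Φ(s,t)(f(s)), then P(s,t)(f'(s)) = π(g'(s)), where P(s,t) is the linear part of Φ(s,t) and π is the orthogonal projection onto the direction space T(s) of H_s. -/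
/-!
Write `Φ(σ,t) x = Φ(σ,t) 0 + P(σ,t) x`. The product rule splits `g'(s)` into the velocity at
`σ = s` of the rolling curve `σ ↦ Φ(σ,t)(f s)` through the frozen point `f s`, which is normal to
`T s`, plus `P(s,t)(f' s)`, which lies in `T s` because `f'` takes values in `T t` and `P(s,t)`
carries `T t` into `T s`. Projecting onto `T s` removes the normal part. In finite dimension the
operator curve `σ ↦ P(σ,t)` is differentiable as soon as each `σ ↦ Φ(σ,t) x` is.
-/

open scoped RealInnerProductSpace
open Filter Topology

section

variable {𝕜 : Type*} [NontriviallyNormedField 𝕜]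
  {D E F : Type*} [NormedAddCommGroup D] [NormedSpace 𝕜 D]
  [NormedAddCommGroup E] [NormedSpace 𝕜 E] [NormedAddCommGroup F] [NormedSpace 𝕜 F]

theorem differentiableAt_clm_apply_iff [CompleteSpace 𝕜] [FiniteDimensional 𝕜 E]
    {M : D → E →L[𝕜] F} {x : D} :
    DifferentiableAt 𝕜 M x ↔ ∀ y, DifferentiableAt 𝕜 (fun z => M z y) x := by
  refine ⟨fun h y => h.clm_apply (differentiableAt_const y), fun h => ?_⟩
  let d := Module.finrank 𝕜 E
  let e₁ := ContinuousLinearEquiv.ofFinrankEq (Module.finrank_fin_fun 𝕜 (n := d)).symm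
  let e₂ := (e₁.arrowCongr (1 : F ≃L[𝕜] F)).trans (ContinuousLinearEquiv.piRing (Fin d))
  rw [← Function.id_comp M, ← e₂.symm_comp_self]
  exact e₂.symm.differentiableAt.comp x (differentiableAt_pi.mpr fun i => h _)

theorem deriv_mem_of_eventually_sub_mem {f : 𝕜 → F} {s : 𝕜} {a : F} {K : Submodule 𝕜 F}
    (hK : IsClosed (K : Set F)) (hf : ∀ᶠ σ in 𝓝 s, f σ - a ∈ K) : deriv f s ∈ K := by
  by_cases hd : DifferentiableAt 𝕜 f s
  · refine hK.mem_of_tendsto (hasDerivAt_iff_tendsto_slope.mp hd.hasDerivAt) ?_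
    filter_upwards [eventually_nhdsWithin_of_eventually_nhds hf] with σ hσ
    rw [slope_def_module]
    exact K.smul_mem _ (by simpa using K.sub_mem hσ hf.self_of_nhds)
  · rw [deriv_zero_of_not_differentiableAt hd]
    exact K.zero_mem

theorem hasDerivAt_affine_family_apply [CompleteSpace 𝕜] [FiniteDimensional 𝕜 E]
    {A : 𝕜 → E → F} {L : 𝕜 → E →ₗ[𝕜] F} {f : 𝕜 → E} {s : 𝕜}
    (hAL : ∀ σ x v, A σ (x + v) = A σ x + L σ v)
    (hA : ∀ x, DifferentiableAt 𝕜 (fun σ => A σ x) s) (hf : DifferentiableAt 𝕜 f s) :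
    HasDerivAt (fun σ => A σ (f σ)) (deriv (fun σ => A σ (f s)) s + L s (deriv f s)) s := by
  set M : 𝕜 → E →L[𝕜] F := fun σ => (L σ).toContinuousLinearMap
  have hA_eq : ∀ σ x, A σ x = A σ 0 + M σ x := fun σ x => by simpa [M] using hAL σ 0 x
  have hM : DifferentiableAt 𝕜 M s := differentiableAt_clm_apply_iff.mpr fun y =>
    ((hA y).sub (hA 0)).congr_of_eventuallyEq (.of_forall fun σ => by simp [hA_eq σ y])
  have hfrozen := ((hA 0).hasDerivAt.add (hM.hasDerivAt.clm_apply (hasDerivAt_const s (f s)))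
    ).congr_of_eventuallyEq (.of_forall fun σ => hA_eq σ (f s))
  have hmoving := ((hA 0).hasDerivAt.add (hM.hasDerivAt.clm_apply hf.hasDerivAt)
    ).congr_of_eventuallyEq (.of_forall fun σ => hA_eq σ (f σ))
  rw [hfrozen.deriv, map_zero, add_zero, add_assoc]
  exact hmoving

end

theorem apply_mem_of_affine_mapsTo {R V W : Type*} [Ring R] [AddCommGroup V] [Module R V]
    [AddCommGroup W] [Module R W] {A L : V → W} {K : Submodule R V} {K' : Submodule R W}
    {a : V} {b : W} (hAL : ∀ x v, A (x + v) = A x + L v) (hA : ∀ x, x - a ∈ K → A x - b ∈ K')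
    {x v : V} (hx : x - a ∈ K) (hv : v ∈ K) : L v ∈ K' := by
  have hxv : x + v - a ∈ K := by simpa [add_sub_right_comm] using K.add_mem hx hv
  simpa [hAL] using K'.sub_mem (hA _ hxv) (hA x hx)

theorem rolling_derivative_is_projected_transport_general {ν : ℕ} (I : Set ℝ)
    (hIopen : IsOpen I)
    (γ : ℝ → EuclideanSpace ℝ (Fin ν))
    (T : ℝ → Submodule ℝ (EuclideanSpace ℝ (Fin ν)))
    (Φ : ℝ → ℝ → EuclideanSpace ℝ (Fin ν) → EuclideanSpace ℝ (Fin ν))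
    (P : ℝ → ℝ → EuclideanSpace ℝ (Fin ν) →ₗ[ℝ] EuclideanSpace ℝ (Fin ν))
    (hmem : ∀ s ∈ I, ∀ t ∈ I, ∀ x, x - γ s ∈ T s → Φ t s x - γ t ∈ T t)
    (haff : ∀ s t x v, Φ t s (x + v) = Φ t s x + P t s v)
    (hΦdiff : ∀ s ∈ I, ∀ x, Differentiable ℝ (fun r => Φ r s x))
    (hroll : ∀ s ∈ I, ∀ x, x - γ s ∈ T s →
      ∀ u ∈ I, ∀ w ∈ T u, ⟪deriv (fun r => Φ r s x) u, w⟫ = 0)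
    (t : ℝ) (ht : t ∈ I)
    (f : ℝ → EuclideanSpace ℝ (Fin ν)) (hf : ContDiff ℝ 1 f)
    (hfmem : ∀ s ∈ I, f s - γ t ∈ T t) :
    ∀ s ∈ I, P s t (deriv f s) =
      (Submodule.orthogonalProjectionOnto (T s) (deriv (fun σ => Φ σ t (f σ)) s) :
        EuclideanSpace ℝ (Fin ν)) := by
  intro s hs
  have hf' : deriv f s ∈ T t :=
    deriv_mem_of_eventually_sub_mem (T t).closed_of_finiteDimensional
      (eventually_of_mem (hIopen.mem_nhds hs) hfmem)
  have hsplit : deriv (fun σ => Φ σ t (f σ)) s =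
      deriv (fun σ => Φ σ t (f s)) s + P s t (deriv f s) :=
    (hasDerivAt_affine_family_apply (haff t) (fun x => hΦdiff t ht x s)
      (hf.differentiable one_ne_zero s)).deriv
  have hnormal : deriv (fun σ => Φ σ t (f s)) s ∈ (T s)ᗮ :=
    (Submodule.mem_orthogonal' _ _).mpr (hroll t ht (f s) (hfmem s hs) s hs)
  have htangent : P s t (deriv f s) ∈ T s :=
    apply_mem_of_affine_mapsTo (haff t s) (hmem t ht s hs) (hfmem s hs) hf'
  rw [← Submodule.starProjection_apply,
    Submodule.eq_starProjection_of_mem_orthogonal' htangent hnormal (hsplit.trans (add_comm _ _))]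

/-- If `f : I → H_t` is C¹ and `g(s) = Φ(s,t)(f(s))`, where `Φ` are the rolling
maps with linear parts `P`, then `P(s,t)(f'(s)) = π(g'(s))`, with `π` the
orthogonal projection onto the direction space `T s` of `H_s`. -/
theorem rolling_derivative_is_projected_transport {ν : ℕ} (I : Set ℝ)
    (hIopen : IsOpen I) (hIconn : I.OrdConnected)
    (γ : ℝ → EuclideanSpace ℝ (Fin ν))
    (T : ℝ → Submodule ℝ (EuclideanSpace ℝ (Fin ν)))
    (Φ : ℝ → ℝ → EuclideanSpace ℝ (Fin ν) → EuclideanSpace ℝ (Fin ν))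
    (P : ℝ → ℝ → EuclideanSpace ℝ (Fin ν) →ₗ[ℝ] EuclideanSpace ℝ (Fin ν))
    (hinit : ∀ s x, Φ s s x = x)
    (hgroup : ∀ s t u x, Φ u t (Φ t s x) = Φ u s x)
    (hmem : ∀ s ∈ I, ∀ t ∈ I, ∀ x, x - γ s ∈ T s → Φ t s x - γ t ∈ T t)
    (haff : ∀ s t x v, Φ t s (x + v) = Φ t s x + P t s v)
    (hΦdiff : ∀ s ∈ I, ∀ x, Differentiable ℝ (fun r => Φ r s x))
    (hroll : ∀ s ∈ I, ∀ x, x - γ s ∈ T s →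
      ∀ u ∈ I, ∀ w ∈ T u, ⟪deriv (fun r => Φ r s x) u, w⟫ = 0)
    (t : ℝ) (ht : t ∈ I)
    (f : ℝ → EuclideanSpace ℝ (Fin ν)) (hf : ContDiff ℝ 1 f)
    (hfmem : ∀ s ∈ I, f s - γ t ∈ T t)
    (hgdiff : Differentiable ℝ (fun σ => Φ σ t (f σ))) :
    ∀ s ∈ I, P s t (deriv f s) =
      (Submodule.orthogonalProjectionOnto (T s) (deriv (fun σ => Φ σ t (f σ)) s) :
        EuclideanSpace ℝ (Fin ν)) :=
  rolling_derivative_is_projected_transport_general I hIopen γ T Φ P hmem haff hΦdiff hroll t ht f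
    hf hfmem
end

section
/- Let γ : I → M ⊆ ℝ^ν be a regular C² curve on a C² submanifold and γ̂_t its trace curve in H_t under the rolling tangent space. Then for every s: π(k_γ(s)) = P(s,t)(k_{γ̂_t}(s)), where k denotes the curvature vector of a regular curve and π is orthogonal projection onto T_{γ(s)}M. Consequently, k_γ(s) ⊥ T_{γ(s)}M for all s (i.e., γ is a geodesic) if and only if k_{γ̂_t} ≡ 0 (i.e., γ̂_t is a straight line). -/
open scoped RealInnerProductSpace

/-!
The curvature vector `k(v, a) = ‖v‖⁻² (a - ⟪a, v⟫ ‖v‖⁻² v)` of a curve with velocity `v` and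
acceleration `a` is built from `v`, `a`, `‖v‖` and `⟪a, v⟫` only. Both the parallel transport `P(s,t)`
(an isometry on `T_{γ(t)}M`, hence inner-product preserving there) and the projection `π` onto
`T_{γ(s)}M ∋ γ'(s)` preserve these data, so they commute with taking curvature vectors:
`π k_γ = k(γ', π γ'') = k(P γ̂', P γ̂'') = P k_{γ̂}`. Since `P` is injective on `T_{γ(t)}M`,
`k_{γ̂}(s) = 0` iff `π k_γ(s) = 0`, i.e. iff `k_γ(s) ⊥ T_{γ(s)}M`.
-/

variable {E F : Type*} [NormedAddCommGroup E] [InnerProductSpace ℝ E]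
  [NormedAddCommGroup F] [InnerProductSpace ℝ F]

/-- `k_γ(s) = curvatureVector (γ'(s)) (γ''(s))`. -/
noncomputable def curvatureVector (v a : E) : E :=
  (‖v‖ ^ 2)⁻¹ • (a - (⟪a, v⟫ / ‖v‖ ^ 2) • v)

theorem curvatureVector_mem {K : Submodule ℝ E} {v a : E} (hv : v ∈ K) (ha : a ∈ K) :
    curvatureVector v a ∈ K :=
  K.smul_mem _ (K.sub_mem ha (K.smul_mem _ hv))

theorem LinearMap.map_curvatureVector (L : E →ₗ[ℝ] F) {v a : E} (hv : ‖L v‖ = ‖v‖)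
    (ha : ⟪L a, L v⟫ = ⟪a, v⟫) :
    L (curvatureVector v a) = curvatureVector (L v) (L a) := by
  simp only [curvatureVector, map_smul, map_sub, hv, ha]

theorem LinearMap.inner_map_map_of_norm_map_eq (L : E →ₗ[ℝ] F) {K : Submodule ℝ E}
    (hL : ∀ v ∈ K, ‖L v‖ = ‖v‖) {v w : E} (hv : v ∈ K) (hw : w ∈ K) :
    ⟪L v, L w⟫ = ⟪v, w⟫ :=
  LinearIsometry.inner_map_map ⟨L ∘ₗ K.subtype, fun x => hL x x.2⟩ ⟨v, hv⟩ ⟨w, hw⟩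

theorem LinearMap.eq_zero_of_norm_map_eq {L : E →ₗ[ℝ] F} {K : Submodule ℝ E}
    (hL : ∀ v ∈ K, ‖L v‖ = ‖v‖) {v : E} (hv : v ∈ K) (h : L v = 0) : v = 0 := by
  rw [← norm_eq_zero, ← hL v hv, h, norm_zero]

theorem Submodule.starProjection_curvatureVector (K : Submodule ℝ E) [K.HasOrthogonalProjection]
    {v : E} (hv : v ∈ K) (a : E) :
    K.starProjection (curvatureVector v a) = curvatureVector v (K.starProjection a) := by
  have hKv : K.starProjection v = v := K.starProjection_eq_self_iff.mpr hv
  have hinner : ⟪K.starProjection a, K.starProjection v⟫ = ⟪a, v⟫ := by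
    rw [hKv, K.inner_starProjection_left_eq_right, hKv]
  refine ((K.starProjection : E →ₗ[ℝ] E).map_curvatureVector (congrArg norm hKv) hinner).trans ?_
  exact congrArg₂ curvatureVector hKv rfl

theorem geodesic_iff_trace_straight_general {ν : ℕ} (I : Set ℝ)
    (γ γh : ℝ → EuclideanSpace ℝ (Fin ν))
    (T : ℝ → Submodule ℝ (EuclideanSpace ℝ (Fin ν)))
    (htan : ∀ s ∈ I, deriv γ s ∈ T s)
    (t : ℝ)
    (hγhtan : ∀ s ∈ I, deriv γh s ∈ T t ∧ deriv (deriv γh) s ∈ T t)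
    (P : ℝ → ℝ → EuclideanSpace ℝ (Fin ν) →ₗ[ℝ] EuclideanSpace ℝ (Fin ν))
    (hisom : ∀ s ∈ I, ∀ v ∈ T t, ‖P s t v‖ = ‖v‖)
    (hP1 : ∀ s ∈ I, P s t (deriv γh s) = deriv γ s)
    (hP2 : ∀ s ∈ I, P s t (deriv (deriv γh) s) =
      (Submodule.orthogonalProjectionOnto (T s) (deriv (deriv γ) s) : EuclideanSpace ℝ (Fin ν)))
    (k kh : ℝ → EuclideanSpace ℝ (Fin ν))
    (hk : ∀ s, k s = (‖deriv γ s‖ ^ 2)⁻¹ •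
      (deriv (deriv γ) s -
        (⟪deriv (deriv γ) s, deriv γ s⟫ / ‖deriv γ s‖ ^ 2) • deriv γ s))
    (hkh : ∀ s, kh s = (‖deriv γh s‖ ^ 2)⁻¹ •
      (deriv (deriv γh) s -
        (⟪deriv (deriv γh) s, deriv γh s⟫ / ‖deriv γh s‖ ^ 2) • deriv γh s)) :
    (∀ s ∈ I, (Submodule.orthogonalProjectionOnto (T s) (k s) : EuclideanSpace ℝ (Fin ν)) =
        P s t (kh s)) ∧
      ((∀ s ∈ I, ∀ w ∈ T s, ⟪k s, w⟫ = 0) ↔ (∀ s ∈ I, kh s = 0)) := by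
  simp only [← Submodule.starProjection_apply] at hP2 ⊢
  have hk' : ∀ s, k s = curvatureVector (deriv γ s) (deriv (deriv γ) s) := hk
  have hkh' : ∀ s, kh s = curvatureVector (deriv γh s) (deriv (deriv γh) s) := hkh
  have hproj : ∀ s ∈ I, (T s).starProjection (k s) = P s t (kh s) := by
    intro s hs
    obtain ⟨hv, ha⟩ := hγhtan s hs
    rw [hk', hkh', (T s).starProjection_curvatureVector (htan s hs), ← hP1 s hs, ← hP2 s hs,
      (P s t).map_curvatureVector (hisom s hs _ hv)
        ((P s t).inner_map_map_of_norm_map_eq (hisom s hs) ha hv)]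
  refine ⟨hproj, forall₂_congr fun s hs => ?_⟩
  obtain ⟨hv, ha⟩ := hγhtan s hs
  rw [← Submodule.mem_orthogonal', ← Submodule.starProjection_apply_eq_zero_iff, hproj s hs]
  refine ⟨(P s t).eq_zero_of_norm_map_eq (hisom s hs) ?_, fun h => by rw [h, map_zero]⟩
  rw [hkh']
  exact curvatureVector_mem hv ha

/-- `π(k_γ(s)) = P(s,t)(k_{γ̂_t}(s))`; consequently `γ` is a geodesic
(curvature vector everywhere orthogonal to the tangent space) iff the trace
curve `γ̂_t` is a straight line (`k_{γ̂_t} ≡ 0`). -/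
theorem geodesic_iff_trace_straight {ν : ℕ} (I : Set ℝ)
    (hIopen : IsOpen I) (hIconn : I.OrdConnected)
    (γ γh : ℝ → EuclideanSpace ℝ (Fin ν))
    (hγ : ContDiff ℝ 2 γ) (hγh : ContDiff ℝ 2 γh)
    (hreg : ∀ s ∈ I, deriv γ s ≠ 0) (hregh : ∀ s ∈ I, deriv γh s ≠ 0)
    (T : ℝ → Submodule ℝ (EuclideanSpace ℝ (Fin ν)))
    (htan : ∀ s ∈ I, deriv γ s ∈ T s)
    (t : ℝ) (ht : t ∈ I)
    (hγhtan : ∀ s ∈ I, deriv γh s ∈ T t ∧ deriv (deriv γh) s ∈ T t)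
    (P : ℝ → ℝ → EuclideanSpace ℝ (Fin ν) →ₗ[ℝ] EuclideanSpace ℝ (Fin ν))
    (hrange : ∀ s ∈ I, ∀ v ∈ T t, P s t v ∈ T s)
    (hisom : ∀ s ∈ I, ∀ v ∈ T t, ‖P s t v‖ = ‖v‖)
    (hP1 : ∀ s ∈ I, P s t (deriv γh s) = deriv γ s)
    (hP2 : ∀ s ∈ I, P s t (deriv (deriv γh) s) =
      (Submodule.orthogonalProjectionOnto (T s) (deriv (deriv γ) s) : EuclideanSpace ℝ (Fin ν)))
    (k kh : ℝ → EuclideanSpace ℝ (Fin ν))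
    (hk : ∀ s, k s = (‖deriv γ s‖ ^ 2)⁻¹ •
      (deriv (deriv γ) s -
        (⟪deriv (deriv γ) s, deriv γ s⟫ / ‖deriv γ s‖ ^ 2) • deriv γ s))
    (hkh : ∀ s, kh s = (‖deriv γh s‖ ^ 2)⁻¹ •
      (deriv (deriv γh) s -
        (⟪deriv (deriv γh) s, deriv γh s⟫ / ‖deriv γh s‖ ^ 2) • deriv γh s)) :
    (∀ s ∈ I, (Submodule.orthogonalProjectionOnto (T s) (k s) : EuclideanSpace ℝ (Fin ν)) =
        P s t (kh s)) ∧
      ((∀ s ∈ I, ∀ w ∈ T s, ⟪k s, w⟫ = 0) ↔ (∀ s ∈ I, kh s = 0)) :=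
  geodesic_iff_trace_straight_general I γ γh T htan t hγhtan P hisom hP1 hP2 k kh hk hkh
end

section
/- Let ψ : U ⊆ ℝ^n → ℝ^ν be a C² immersion (chart of the submanifold), c : I → U a C¹ curve, γ = ψ ∘ c, and v(t) = Σᵢ ∂ᵢψ(c(t))·wᵢ(t) a vector field of tangent vectors along γ with w : I → ℝ^n differentiable. Then v'(t) is orthogonal to T_{γ(t)}M = span{∂ᵢψ(c(t))} for all t if and only if for all i and t: wᵢ'(t) + Σ_{k,ℓ} Γ^i_{kℓ}(c(t))·c_k'(t)·w_ℓ(t) = 0, where Γ^i_{jk}(x) = Σ_ℓ ĝ^{iℓ}(x)·⟨∂_ℓψ(x), ∂_j∂_kψ(x)⟩ and ĝ^{iℓ} is the inverse of the metric matrix g_{ij}(x) = ⟨∂ᵢψ(x), ∂_jψ(x)⟩. -/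
/-!
By the product and chain rules, `v' = Σᵢ (wᵢ' ∂ᵢψ + wᵢ Σₖ cₖ' ∂ₖ∂ᵢψ)` along `c`. Orthogonality
of `v'` to the span of the `∂ⱼψ` means that the vector `aⱼ = ⟪v', ∂ⱼψ⟫` vanishes, and since
`ginv · g = 1` makes `ginv` invertible, this is equivalent to `ginv · a = 0`. Expanding,
`a = g · w' + (Σₖₗ ⟪∂ⱼψ, ∂ₖ∂ₗψ⟫ cₖ' wₗ)ⱼ`, so `(ginv · a)ᵢ = wᵢ' + Σₖₗ Γⁱₖₗ cₖ' wₗ`.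
-/

open scoped RealInnerProductSpace
open Finset Matrix

section InnerProduct

variable {F : Type*} [NormedAddCommGroup F] [InnerProductSpace ℝ F] {ι : Type*}

theorem forall_inner_mem_span_range_eq_zero_iff (e : ι → F) (v : F) :
    (∀ z ∈ Submodule.span ℝ (Set.range e), ⟪v, z⟫ = 0) ↔ ∀ j, ⟪v, e j⟫ = 0 := by
  simpa only [SetLike.le_def, SetLike.mem_coe, LinearMap.mem_ker, innerₛₗ_apply_apply] using
    (Submodule.span_le (p := LinearMap.ker (innerₛₗ ℝ v))).trans Set.range_subset_iff

variable [Fintype ι]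

theorem inner_sum_smul_add_smul_sum_smul (e : ι → F) (h : ι → ι → F)
    (G : Matrix ι ι ℝ) (hG : ∀ i j, G i j = ⟪e i, e j⟫) (w' c' w : ι → ℝ) :
    (fun j => ⟪∑ i, (w' i • e i + w i • ∑ k, c' k • h k i), e j⟫) =
      G *ᵥ w' + fun j => ∑ k, ∑ l, ⟪e j, h k l⟫ * c' k * w l := by
  ext j
  simp only [sum_inner, inner_add_left, real_inner_smul_left, sum_add_distrib, Pi.add_apply,
    mulVec, dotProduct, hG]
  congr 1
  · exact sum_congr rfl fun i _ => by rw [real_inner_comm]; ring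
  · rw [sum_comm]
    exact sum_congr rfl fun l _ => by
      rw [mul_sum]
      exact sum_congr rfl fun k _ => by rw [real_inner_comm]; ring

theorem mulVec_inner_sum_smul_add_smul_sum_smul [DecidableEq ι] (e : ι → F) (h : ι → ι → F)
    (G Ginv : Matrix ι ι ℝ) (hG : ∀ i j, G i j = ⟪e i, e j⟫) (hinv : Ginv * G = 1)
    (w' c' w : ι → ℝ) :
    Ginv *ᵥ (fun j => ⟪∑ i, (w' i • e i + w i • ∑ k, c' k • h k i), e j⟫) =
      fun i => w' i + ∑ k, ∑ l, (∑ m, Ginv i m * ⟪e m, h k l⟫) * c' k * w l := by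
  rw [inner_sum_smul_add_smul_sum_smul e h G hG, mulVec_add, mulVec_mulVec, hinv, one_mulVec]
  ext i
  simp only [Pi.add_apply, mulVec, dotProduct, mul_sum, sum_mul]
  congr 1
  rw [sum_comm]
  refine sum_congr rfl fun k _ => ?_
  rw [sum_comm]
  exact sum_congr rfl fun l _ => sum_congr rfl fun m _ => by ring

end InnerProduct

section Derivative

variable {F : Type*} [NormedAddCommGroup F] [NormedSpace ℝ F]
  {ι : Type*} [Fintype ι] [DecidableEq ι]

theorem ContinuousLinearMap.apply_eq_sum_smul_single (L : (ι → ℝ) →L[ℝ] F) (v : ι → ℝ) :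
    L v = ∑ j, v j • L (Pi.single j 1) := by
  conv_lhs => rw [pi_eq_sum_univ' v]
  simp only [map_sum, map_smul]

variable {ψ : (ι → ℝ) → F} {c : ℝ → ι → ℝ} {t : ℝ}

theorem hasDerivAt_fderiv_comp_single (hψ : ContDiff ℝ 2 ψ) (hc : DifferentiableAt ℝ c t)
    (k : ι) :
    HasDerivAt (fun u => fderiv ℝ ψ (c u) (Pi.single k 1))
      (∑ j, deriv c t j • fderiv ℝ (fun y => fderiv ℝ ψ y (Pi.single k 1)) (c t) (Pi.single j 1))
      t := by
  have hψ' : Differentiable ℝ (fderiv ℝ ψ) :=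
    (hψ.fderiv_right (m := 1) le_rfl).differentiable one_ne_zero
  have hψk : Differentiable ℝ fun y => fderiv ℝ ψ y (Pi.single k 1) :=
    hψ'.clm_apply (differentiable_const _)
  rw [← ContinuousLinearMap.apply_eq_sum_smul_single]
  exact (hψk (c t)).hasFDerivAt.comp_hasDerivAt t hc.hasDerivAt

theorem hasDerivAt_sum_smul_fderiv_comp_single (hψ : ContDiff ℝ 2 ψ)
    (hc : DifferentiableAt ℝ c t) {w : ι → ℝ → ℝ} (hw : ∀ i, DifferentiableAt ℝ (w i) t) :
    HasDerivAt (fun u => ∑ i, w i u • fderiv ℝ ψ (c u) (Pi.single i 1))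
      (∑ i, (deriv (w i) t • fderiv ℝ ψ (c t) (Pi.single i 1) + w i t • ∑ j, deriv c t j •
        fderiv ℝ (fun y => fderiv ℝ ψ y (Pi.single i 1)) (c t) (Pi.single j 1))) t :=
  HasDerivAt.fun_sum fun i _ => by
    rw [add_comm]
    exact (hw i).hasDerivAt.smul (hasDerivAt_fderiv_comp_single hψ hc i)

end Derivative

theorem parallel_field_in_chart_general {ν n : ℕ}
    (U : Set (Fin n → ℝ))
    (ψ : (Fin n → ℝ) → EuclideanSpace ℝ (Fin ν)) (hψ : ContDiff ℝ 2 ψ)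
    (Dψ : (Fin n → ℝ) → Fin n → EuclideanSpace ℝ (Fin ν))
    (hD : ∀ x i, Dψ x i = fderiv ℝ ψ x (Pi.single i 1))
    (D2ψ : (Fin n → ℝ) → Fin n → Fin n → EuclideanSpace ℝ (Fin ν))
    (hD2 : ∀ x j k, D2ψ x j k =
      fderiv ℝ (fun y => fderiv ℝ ψ y (Pi.single k 1)) x (Pi.single j 1))
    (g ginv : (Fin n → ℝ) → Matrix (Fin n) (Fin n) ℝ)
    (hg : ∀ x i j, g x i j = ⟪Dψ x i, Dψ x j⟫)
    (hginv : ∀ x ∈ U, g x * ginv x = 1 ∧ ginv x * g x = 1)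
    (Γ : (Fin n → ℝ) → Fin n → Fin n → Fin n → ℝ)
    (hΓ : ∀ x i j k, Γ x i j k = ∑ l, ginv x i l * ⟪Dψ x l, D2ψ x j k⟫)
    (I : Set ℝ)
    (c : ℝ → (Fin n → ℝ)) (hc : ContDiff ℝ 1 c) (hcU : ∀ t ∈ I, c t ∈ U)
    (w : Fin n → ℝ → ℝ) (hw : ∀ i, Differentiable ℝ (w i)) :
    (∀ t ∈ I, ∀ z ∈ Submodule.span ℝ (Set.range (Dψ (c t))),
        ⟪deriv (fun u => ∑ i, w i u • Dψ (c u) i) t, z⟫ = 0) ↔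
      (∀ t ∈ I, ∀ i, deriv (w i) t +
        ∑ k, ∑ l, Γ (c t) i k l * deriv (fun τ => c τ k) t * w l t = 0) := by
  obtain rfl : Dψ = fun x i => fderiv ℝ ψ x (Pi.single i 1) := funext₂ hD
  obtain rfl : D2ψ = fun x j k =>
      fderiv ℝ (fun y => fderiv ℝ ψ y (Pi.single k 1)) x (Pi.single j 1) := funext₃ hD2
  refine forall₂_congr fun t ht => ?_
  have hginvg : ginv (c t) * g (c t) = 1 := (hginv (c t) (hcU t ht)).2
  have hginv_unit : IsUnit (ginv (c t)) :=
    (isUnit_iff_isUnit_det _).2 (isUnit_det_of_right_inverse hginvg)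
  have hct : DifferentiableAt ℝ c t := hc.differentiable one_ne_zero t
  rw [(hasDerivAt_sum_smul_fderiv_comp_single hψ hct fun i => hw i t).deriv,
    forall_inner_mem_span_range_eq_zero_iff]
  refine (funext_iff (g := (0 : Fin n → ℝ))).symm.trans ?_
  rw [← (mulVec_injective_of_isUnit hginv_unit).eq_iff' (mulVec_zero _),
    mulVec_inner_sum_smul_add_smul_sum_smul _ _ _ _ (hg (c t)) hginvg, funext_iff,
    deriv_pi fun k => differentiableAt_pi.1 hct k]
  simp only [hΓ, Pi.zero_apply]

/-- In a chart `ψ`, a tangent field `v(t) = Σᵢ wᵢ(t)·∂ᵢψ(c(t))` along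
`γ = ψ ∘ c` has derivative orthogonal to the tangent space
`span{∂ᵢψ(c(t))}` iff `wᵢ' + Σ_{k,ℓ} Γ^i_{kℓ}(c)·c_k'·w_ℓ = 0`
(vanishing covariant derivative in local coordinates). -/
theorem parallel_field_in_chart {ν n : ℕ}
    (U : Set (Fin n → ℝ)) (hU : IsOpen U)
    (ψ : (Fin n → ℝ) → EuclideanSpace ℝ (Fin ν)) (hψ : ContDiff ℝ 2 ψ)
    (Dψ : (Fin n → ℝ) → Fin n → EuclideanSpace ℝ (Fin ν))
    (hD : ∀ x i, Dψ x i = fderiv ℝ ψ x (Pi.single i 1))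
    (D2ψ : (Fin n → ℝ) → Fin n → Fin n → EuclideanSpace ℝ (Fin ν))
    (hD2 : ∀ x j k, D2ψ x j k =
      fderiv ℝ (fun y => fderiv ℝ ψ y (Pi.single k 1)) x (Pi.single j 1))
    (himm : ∀ x ∈ U, LinearIndependent ℝ (Dψ x))
    (g ginv : (Fin n → ℝ) → Matrix (Fin n) (Fin n) ℝ)
    (hg : ∀ x i j, g x i j = ⟪Dψ x i, Dψ x j⟫)
    (hginv : ∀ x ∈ U, g x * ginv x = 1 ∧ ginv x * g x = 1)
    (Γ : (Fin n → ℝ) → Fin n → Fin n → Fin n → ℝ)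
    (hΓ : ∀ x i j k, Γ x i j k = ∑ l, ginv x i l * ⟪Dψ x l, D2ψ x j k⟫)
    (I : Set ℝ) (hIopen : IsOpen I) (hIconn : I.OrdConnected)
    (c : ℝ → (Fin n → ℝ)) (hc : ContDiff ℝ 1 c) (hcU : ∀ t ∈ I, c t ∈ U)
    (w : Fin n → ℝ → ℝ) (hw : ∀ i, Differentiable ℝ (w i)) :
    (∀ t ∈ I, ∀ z ∈ Submodule.span ℝ (Set.range (Dψ (c t))),
        ⟪deriv (fun u => ∑ i, w i u • Dψ (c u) i) t, z⟫ = 0) ↔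
      (∀ t ∈ I, ∀ i, deriv (w i) t +
        ∑ k, ∑ l, Γ (c t) i k l * deriv (fun τ => c τ k) t * w l t = 0) :=
  parallel_field_in_chart_general U ψ hψ Dψ hD D2ψ hD2 g ginv hg hginv Γ hΓ I c hc hcU w hw
end
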